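/- (Rotation estimation convergence) Let V be a finite set with symmetric adjacency relation Adj, let R̃ : V × V → SO(3) be pairwise consistent relative rotation measurements (R̃(j,i) = R̃(i,j)ᵀ for adjacent i, j), and let ε > 0. Let R_i : [0,∞) → ℝ^{3×3} (i ∈ V) be curves with R_i(t) ∈ SO(3) and θ(R_i(t)ᵀ R_j(t) R̃(i,j)ᵀ) ∈ (0, π/2 − ε] for all adjacent i, j and all t ≥ 0, satisfying the GeoD rotation dynamics: at every t ≥ 0, R_i has derivative R_i(t) · ( Σ_{j: Adj(i,j)} Log(R_i(t)ᵀ R_j(t) R̃(i,j)ᵀ) ). Then the estimates converge to the set of equilibria: for every i ∈ V, the rotational control ω_i(t) := Σ_{j: Adj(i,j)} (Log(R_i(t)ᵀ R_j(t) R̃(i,j)ᵀ))^∨ tends to 0 as t → ∞ (equivalently, the derivative of each R_i tends to the zero matrix). -/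

import Mathlib

open Matrix Real Filter

/-- The vee map, inverse of the hat map on skew-symmetric matrices. -/
def vee (S : Matrix (Fin 3) (Fin 3) ℝ) : EuclideanSpace ℝ (Fin 3) :=
  WithLp.toLp 2 ![S 2 1, S 0 2, S 1 0]

/-- `SO(3)`: real 3×3 matrices `R` with `RᵀR = I` and `det R = 1`. -/
def SO3 (R : Matrix (Fin 3) (Fin 3) ℝ) : Prop :=
  Rᵀ * R = 1 ∧ R.det = 1

/-- The rotation angle `θ(R) = arccos((tr(R) − 1)/2)`. -/
noncomputable def rotAngle (R : Matrix (Fin 3) (Fin 3) ℝ) : ℝ :=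
  Real.arccos ((Matrix.trace R - 1) / 2)

/-- The matrix logarithm `Log(R) = (θ/(2 sin θ))(R − Rᵀ)` for `θ ≠ 0`, and `0` for `θ = 0`. -/
noncomputable def matLog (R : Matrix (Fin 3) (Fin 3) ℝ) : Matrix (Fin 3) (Fin 3) ℝ :=
  if rotAngle R = 0 then 0
  else (rotAngle R / (2 * Real.sin (rotAngle R))) • (R - Rᵀ)

/-!
Along the flow, each relative rotation `Q = Rᵢᵀ Rⱼ R̃ᵢⱼᵀ` moves by `Q' = -Lᵢ Q + Q (R̃ᵢⱼ Lⱼ R̃ᵢⱼᵀ)`,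
where `Lᵢ = Σⱼ Log Qᵢⱼ` is the skew-matrix form of `ωᵢ`. For a skew generator, `tr (Q Ω)` only
sees the skew part `Q - Qᵀ = (2 sin θ / θ) Log Q`, so `d/dt (θ² / 2)` is a trace pairing of
`Log Q` with `Lᵢ` and `Lⱼ`. Summing over ordered edges and using `R̃ⱼᵢ = R̃ᵢⱼᵀ` to match the
`(j, i)` terms with the `(i, j)` terms, the Lyapunov function `½ Σ θᵢⱼ²` has derivative
`-Σᵢ ‖Lᵢ‖²`. On the cone `0 < θ ≤ π / 2`, `Log` has derivative at most a constant times that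
of `Q`, so `Σᵢ ‖Lᵢ‖²` is Lipschitz in time, and Barbalat's lemma makes it tend to `0`.
-/

open Set
-- Matrices carry the Frobenius norm, for which `‖Q - Qᵀ‖ = 2√2 sin θ` on `SO(3)`.
open scoped Matrix.Norms.Frobenius Topology NNReal

local notation "M₃" => Matrix (Fin 3) (Fin 3) ℝ

namespace Matrix

variable {m n : Type*} [Fintype m] [Fintype n]

theorem frobenius_norm_sq (A : Matrix m n ℝ) : ‖A‖ ^ 2 = ∑ i, ∑ j, A i j ^ 2 := by
  rw [frobenius_norm_def, ← Real.rpow_natCast, ← Real.rpow_mul (by positivity)]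
  norm_num

theorem frobenius_norm_sq_eq_trace (A : Matrix m n ℝ) : ‖A‖ ^ 2 = trace (Aᵀ * A) := by
  rw [frobenius_norm_sq, Finset.sum_comm]
  simp [trace, mul_apply, sq]

theorem abs_apply_le_frobenius_norm (A : Matrix m n ℝ) (i : m) (j : n) : |A i j| ≤ ‖A‖ := by
  have hrow : A i j ^ 2 ≤ ∑ j', A i j' ^ 2 :=
    Finset.single_le_sum (fun _ _ => sq_nonneg _) (Finset.mem_univ j)
  have hall : ∑ j', A i j' ^ 2 ≤ ∑ i', ∑ j', A i' j' ^ 2 :=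
    Finset.single_le_sum (f := fun i' => ∑ j', A i' j' ^ 2)
      (fun _ _ => Finset.sum_nonneg fun _ _ => sq_nonneg _) (Finset.mem_univ i)
  simpa using sq_le_sq.1 ((hrow.trans hall).trans_eq (frobenius_norm_sq A).symm)

theorem abs_trace_le_frobenius_norm (A : Matrix n n ℝ) : |trace A| ≤ Fintype.card n * ‖A‖ :=
  calc |trace A| ≤ ∑ i, |A i i| := Finset.abs_sum_le_sum_abs _ _
    _ ≤ ∑ _i : n, ‖A‖ := Finset.sum_le_sum fun i _ => abs_apply_le_frobenius_norm A i i
    _ = Fintype.card n * ‖A‖ := by simp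

theorem trace_mul_eq_half_trace_sub_transpose_mul (A Ω : Matrix n n ℝ) (hΩ : Ωᵀ = -Ω) :
    trace (A * Ω) = trace ((A - Aᵀ) * Ω) / 2 := by
  have : trace (Aᵀ * Ω) = -trace (A * Ω) := by
    rw [← trace_transpose, transpose_mul, transpose_transpose, hΩ, Matrix.neg_mul, trace_neg,
      trace_mul_comm]
  rw [Matrix.sub_mul, trace_sub, this]
  ring

theorem trace_mul_self_eq_neg_frobenius_norm_sq (A : Matrix n n ℝ) (hA : Aᵀ = -A) :
    trace (A * A) = -‖A‖ ^ 2 := by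
  rw [frobenius_norm_sq_eq_trace, hA, Matrix.neg_mul, trace_neg, neg_neg]

end Matrix

namespace SO3

variable {A B : M₃}

theorem mul_transpose (h : SO3 A) : A * Aᵀ = 1 := mul_eq_one_comm.mp h.1

theorem transpose (h : SO3 A) : SO3 Aᵀ :=
  ⟨by simpa using h.mul_transpose, by simpa using h.2⟩

theorem mul (hA : SO3 A) (hB : SO3 B) : SO3 (A * B) := by
  refine ⟨?_, by rw [det_mul, hA.2, hB.2, one_mul]⟩
  rw [transpose_mul, Matrix.mul_assoc, ← Matrix.mul_assoc Aᵀ, hA.1, Matrix.one_mul, hB.1]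

theorem norm_eq (h : SO3 A) : ‖A‖ = √3 := by
  rw [← Real.sqrt_sq (norm_nonneg A), frobenius_norm_sq_eq_trace, h.1]
  simp

theorem adjugate_eq (h : SO3 A) : adjugate A = Aᵀ := by
  have h2 := adjugate_mul A
  rw [h.2, one_smul] at h2
  calc adjugate A = adjugate A * A * Aᵀ := by rw [Matrix.mul_assoc, h.mul_transpose, Matrix.mul_one]
    _ = Aᵀ := by rw [h2, Matrix.one_mul]

theorem trace_mul_self (h : SO3 A) : trace (A * A) = trace A ^ 2 - 2 * trace A := by
  have key : trace (A * A) = trace A ^ 2 - 2 * trace (adjugate A) := by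
    rw [adjugate_fin_three]
    simp only [trace, diag_apply, mul_apply, Fin.sum_univ_three, of_apply, cons_val',
      cons_val_fin_one, cons_val_zero, cons_val_one, cons_val]
    ring
  rw [key, h.adjugate_eq, trace_transpose]

theorem norm_sub_transpose_sq (h : SO3 A) :
    ‖A - Aᵀ‖ ^ 2 = 8 * (1 - ((trace A - 1) / 2) ^ 2) := by
  have h3 : trace (Aᵀ * A) = 3 := by rw [h.1]; simp
  have h3' : trace (A * Aᵀ) = 3 := by rw [h.mul_transpose]; simp
  have hsq : trace (Aᵀ * Aᵀ) = trace (A * A) := by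
    rw [← transpose_mul, trace_transpose]
  rw [frobenius_norm_sq_eq_trace, transpose_sub, transpose_transpose, Matrix.sub_mul,
    Matrix.mul_sub, Matrix.mul_sub, trace_sub, trace_sub, trace_sub, h3, h3', hsq,
    h.trace_mul_self]
  ring

theorem norm_sub_transpose (h : SO3 A) : ‖A - Aᵀ‖ = 2 * √2 * sin (rotAngle A) := by
  rw [rotAngle, sin_arccos, ← Real.sqrt_sq (norm_nonneg _), h.norm_sub_transpose_sq,
    show (8 : ℝ) = 2 ^ 2 * 2 by norm_num, Real.sqrt_mul (by positivity),
    Real.sqrt_mul (by positivity), Real.sqrt_sq (by norm_num)]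

end SO3

section MatLog

variable {A O Ω : M₃}

theorem rotAngle_nonneg (A : M₃) : 0 ≤ rotAngle A := arccos_nonneg _

theorem rotAngle_transpose (A : M₃) : rotAngle Aᵀ = rotAngle A := by
  simp [rotAngle]

theorem rotAngle_conj (hO : Oᵀ * O = 1) : rotAngle (Oᵀ * A * O) = rotAngle A := by
  rw [rotAngle, rotAngle, Matrix.mul_assoc, trace_mul_comm, Matrix.mul_assoc,
    mul_eq_one_comm.mp hO, Matrix.mul_one]

theorem matLog_of_rotAngle_ne_zero (h : rotAngle A ≠ 0) :
    matLog A = (rotAngle A / (2 * sin (rotAngle A))) • (A - Aᵀ) :=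
  if_neg h

theorem transpose_matLog (A : M₃) : (matLog A)ᵀ = -matLog A := by
  unfold matLog
  split_ifs
  · simp
  · rw [transpose_smul, transpose_sub, transpose_transpose, ← smul_neg, neg_sub]

theorem matLog_transpose (A : M₃) : matLog Aᵀ = -matLog A := by
  unfold matLog
  rw [rotAngle_transpose]
  split_ifs
  · simp
  · rw [transpose_transpose, ← smul_neg, neg_sub]

theorem matLog_conj (hO : Oᵀ * O = 1) : matLog (Oᵀ * A * O) = Oᵀ * matLog A * O := by
  unfold matLog
  rw [rotAngle_conj hO]
  split_ifs
  · simp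
  · rw [transpose_mul, transpose_mul, transpose_transpose, ← Matrix.mul_assoc, Matrix.mul_smul,
      Matrix.smul_mul, Matrix.mul_sub, Matrix.sub_mul]

theorem SO3.norm_matLog_le (h : SO3 A) : ‖matLog A‖ ≤ √2 * rotAngle A := by
  unfold matLog
  split_ifs with h0
  · simp [h0]
  · have hθ := rotAngle_nonneg A
    have hs : 0 ≤ sin (rotAngle A) := sin_nonneg_of_nonneg_of_le_pi hθ (arccos_le_pi _)
    rw [norm_smul, h.norm_sub_transpose, Real.norm_of_nonneg (by positivity)]
    rcases hs.eq_or_lt with hs0 | hs0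
    · rw [← hs0, mul_zero, div_zero, zero_mul]
      positivity
    · exact le_of_eq (by field_simp)

theorem trace_mul_eq_trace_matLog_mul (hΩ : Ωᵀ = -Ω) (h0 : rotAngle A ≠ 0)
    (hs : sin (rotAngle A) ≠ 0) :
    trace (A * Ω) = sin (rotAngle A) / rotAngle A * trace (matLog A * Ω) := by
  rw [trace_mul_eq_half_trace_sub_transpose_mul A Ω hΩ, matLog_of_rotAngle_ne_zero h0,
    Matrix.smul_mul, trace_smul, smul_eq_mul]
  field_simp

end MatLog

theorem vee_sum {ι : Type*} (s : Finset ι) (A : ι → M₃) :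
    ∑ j ∈ s, vee (A j) = vee (∑ j ∈ s, A j) := by
  ext p
  fin_cases p <;> simp [vee, Matrix.sum_apply]

theorem norm_vee_le (A : M₃) : ‖vee A‖ ≤ ‖A‖ := by
  rw [EuclideanSpace.norm_eq, ← Real.sqrt_sq (norm_nonneg A), frobenius_norm_sq]
  refine Real.sqrt_le_sqrt ?_
  simp only [vee, norm_eq_abs, sq_abs, Fin.sum_univ_three, cons_val_zero, cons_val_one, cons_val]
  nlinarith [sq_nonneg (A 0 0), sq_nonneg (A 0 1), sq_nonneg (A 1 1), sq_nonneg (A 1 2),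
    sq_nonneg (A 2 0), sq_nonneg (A 2 2)]

namespace Real

theorem le_two_mul_sin {θ : ℝ} (h0 : 0 ≤ θ) (h1 : θ ≤ π / 2) : θ ≤ 2 * sin θ := by
  have h4 : 1 ≤ 4 / π := by rw [le_div_iff₀ pi_pos]; linarith [pi_lt_four]
  calc θ ≤ 4 / π * θ := le_mul_of_one_le_left h0 h4
    _ = 2 * (2 / π * θ) := by ring
    _ ≤ 2 * sin θ := by linarith [mul_le_sin h0 h1]

theorem abs_sin_sub_mul_cos_le {θ : ℝ} (h0 : 0 ≤ θ) : |sin θ - θ * cos θ| ≤ θ ^ 3 / 2 := by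
  rw [abs_le]
  constructor <;>
    nlinarith [sin_le h0, sin_ge_sub_cube h0, one_sub_sq_div_two_le_cos (x := θ), cos_le_one θ]

-- `(sin θ - θ cos θ) / (2 sin² θ)` is the derivative of `θ / (2 sin θ)`, the coefficient of
-- `matLog`.
theorem abs_sin_sub_mul_cos_div_le_one {θ : ℝ} (h0 : 0 < θ) (h1 : θ ≤ π / 2) :
    |(sin θ - θ * cos θ) / (2 * sin θ ^ 2)| ≤ 1 := by
  have hsin : 0 < 2 * sin θ ^ 2 := by
    have := sin_pos_of_pos_of_lt_pi h0 (by linarith [pi_pos]); positivity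
  have hsq : 8 / π ^ 2 * θ ^ 2 ≤ 2 * sin θ ^ 2 :=
    calc 8 / π ^ 2 * θ ^ 2 = 2 * (2 / π * θ) ^ 2 := by ring
      _ ≤ 2 * sin θ ^ 2 := by gcongr; exact mul_le_sin h0.le h1
  have hcube : θ ^ 3 / 2 ≤ 8 / π ^ 2 * θ ^ 2 := by
    have hπ3 : π ^ 3 < 32 := by nlinarith [pi_lt_d2, pi_pos]
    have : θ * π ^ 2 ≤ 16 := by nlinarith [pi_pos]
    rw [div_mul_eq_mul_div, le_div_iff₀ (by positivity)]
    nlinarith [sq_nonneg θ]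
  rw [abs_div, abs_of_pos hsin, div_le_one hsin]
  linarith [abs_sin_sub_mul_cos_le h0.le]

end Real

theorem HasDerivAt.of_matrix_entries {A : ℝ → M₃} {A' : M₃} {t : ℝ}
    (h : ∀ p q, HasDerivAt (fun s => A s p q) (A' p q) t) : HasDerivAt A A' t := by
  have hsum : HasDerivAt (fun s => ∑ p, ∑ q, A s p q • single p q (1 : ℝ))
      (∑ p, ∑ q, A' p q • single p q (1 : ℝ)) t :=
    HasDerivAt.fun_sum fun p _ => HasDerivAt.fun_sum fun q _ => (h p q).smul_const _
  have hA : ∀ B : M₃, ∑ p, ∑ q, B p q • single p q (1 : ℝ) = B := fun B => by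
    simp_rw [smul_single, smul_eq_mul, mul_one]
    exact (matrix_eq_sum_single B).symm
  simpa only [hA] using hsum

theorem HasDerivAt.matrix_transpose {A : ℝ → M₃} {A' : M₃} {t : ℝ} (h : HasDerivAt A A' t) :
    HasDerivAt (fun s => (A s)ᵀ) A'ᵀ t :=
  (transposeLinearEquiv (Fin 3) (Fin 3) ℝ ℝ).toLinearMap.toContinuousLinearMap.hasFDerivAt
    |>.comp_hasDerivAt t h

theorem HasDerivAt.matrix_trace {A : ℝ → M₃} {A' : M₃} {t : ℝ} (h : HasDerivAt A A' t) :
    HasDerivAt (fun s => trace (A s)) (trace A') t :=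
  (traceLinearMap (Fin 3) ℝ ℝ).toContinuousLinearMap.hasFDerivAt.comp_hasDerivAt t h

theorem HasDerivAt.rotAngle_comp {A : ℝ → M₃} {A' : M₃} {t : ℝ} (h : HasDerivAt A A' t)
    (h0 : 0 < rotAngle (A t)) (hπ : rotAngle (A t) < π) :
    HasDerivAt (fun s => rotAngle (A s)) (-trace A' / (2 * Real.sin (rotAngle (A t)))) t := by
  have hc1 : (trace (A t) - 1) / 2 ≠ 1 := fun h1 => h0.ne' (by rw [rotAngle, h1, arccos_one])
  have hc2 : (trace (A t) - 1) / 2 ≠ -1 := fun h1 => hπ.ne (by rw [rotAngle, h1, arccos_neg_one])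
  refine ((hasDerivAt_arccos hc2 hc1).comp t
    ((h.matrix_trace.sub_const 1).div_const 2)).congr_deriv ?_
  rw [rotAngle, sin_arccos]
  ring

theorem HasDerivAt.matLog_comp {A : ℝ → M₃} {A' : M₃} {t : ℝ} (h : HasDerivAt A A' t)
    (h0 : 0 < rotAngle (A t)) (hπ : rotAngle (A t) < π) :
    HasDerivAt (fun s => matLog (A s))
      ((rotAngle (A t) / (2 * Real.sin (rotAngle (A t)))) • (A' - A'ᵀ) +
        (-trace A' / (2 * Real.sin (rotAngle (A t))) *
          ((Real.sin (rotAngle (A t)) - rotAngle (A t) * Real.cos (rotAngle (A t))) /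
            (2 * Real.sin (rotAngle (A t)) ^ 2))) • (A t - (A t)ᵀ)) t := by
  have hsin : 0 < Real.sin (rotAngle (A t)) := sin_pos_of_pos_of_lt_pi h0 hπ
  have hθ := h.rotAngle_comp h0 hπ
  have hcoeff : HasDerivAt (fun s => rotAngle (A s) / (2 * Real.sin (rotAngle (A s))))
      (-trace A' / (2 * Real.sin (rotAngle (A t))) *
        ((Real.sin (rotAngle (A t)) - rotAngle (A t) * Real.cos (rotAngle (A t))) /
          (2 * Real.sin (rotAngle (A t)) ^ 2))) t := by
    refine (hθ.div (hθ.sin.const_mul 2) (by positivity)).congr_deriv ?_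
    field_simp
    ring
  refine (hcoeff.smul (h.sub h.matrix_transpose)).congr_of_eventuallyEq ?_
  filter_upwards [hθ.continuousAt.eventually (lt_mem_nhds h0)] with s hs
  exact matLog_of_rotAngle_ne_zero hs.ne'

theorem HasDerivAt.exists_matLog_comp_norm_le {A : ℝ → M₃} {A' : M₃} {t : ℝ}
    (h : HasDerivAt A A' t) (hSO : SO3 (A t)) (h0 : 0 < rotAngle (A t))
    (h1 : rotAngle (A t) ≤ π / 2) :
    ∃ L', HasDerivAt (fun s => matLog (A s)) L' t ∧ ‖L'‖ ≤ 7 * ‖A'‖ := by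
  refine ⟨_, h.matLog_comp h0 (by linarith [pi_pos]), ?_⟩
  set θ := rotAngle (A t)
  have hsin : 0 < Real.sin θ := sin_pos_of_pos_of_lt_pi h0 (by linarith [pi_pos])
  have hfirst : ‖(θ / (2 * Real.sin θ)) • (A' - A'ᵀ)‖ ≤ 1 * (‖A'‖ + ‖A'‖) := by
    rw [norm_smul, Real.norm_of_nonneg (by positivity)]
    gcongr
    · exact (div_le_one (by positivity)).2 (le_two_mul_sin h0.le h1)
    · exact (norm_sub_le _ _).trans_eq (by rw [frobenius_norm_transpose])
  -- The factor `sin θ` of `‖A - Aᵀ‖ = 2√2 sin θ` cancels the `1 / sin θ` in `θ'`.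
  have hsecond : ‖(-trace A' / (2 * Real.sin θ) * ((Real.sin θ - θ * Real.cos θ) /
      (2 * Real.sin θ ^ 2))) • (A t - (A t)ᵀ)‖ ≤ √2 * (3 * ‖A'‖) := by
    rw [norm_smul, hSO.norm_sub_transpose, Real.norm_eq_abs, abs_mul, abs_div, abs_neg,
      abs_of_pos (by positivity : (0 : ℝ) < 2 * Real.sin θ)]
    calc |trace A'| / (2 * Real.sin θ) * |(Real.sin θ - θ * Real.cos θ) / (2 * Real.sin θ ^ 2)|
          * (2 * √2 * Real.sin θ)
        = √2 * |trace A'| * |(Real.sin θ - θ * Real.cos θ) / (2 * Real.sin θ ^ 2)| := by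
          field_simp
      _ ≤ √2 * (3 * ‖A'‖) * 1 := by
          gcongr
          · simpa using abs_trace_le_frobenius_norm A'
          · exact abs_sin_sub_mul_cos_div_le_one h0 h1
      _ = √2 * (3 * ‖A'‖) := mul_one _
  have hsqrt : √2 ≤ 5 / 3 := by
    rw [Real.sqrt_le_left (by norm_num : (0 : ℝ) ≤ 5 / 3)]
    norm_num
  calc _ ≤ _ := norm_add_le _ _
    _ ≤ 1 * (‖A'‖ + ‖A'‖) + √2 * (3 * ‖A'‖) := add_le_add hfirst hsecond
    _ ≤ 7 * ‖A'‖ := by nlinarith [norm_nonneg A']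

theorem HasDerivAt.rotAngle_sq_div_two_of_skew {Q : ℝ → M₃} {X Y : M₃} {t : ℝ}
    (hQ : HasDerivAt Q (-X * Q t + Q t * Y) t) (hX : Xᵀ = -X) (hY : Yᵀ = -Y)
    (h0 : 0 < rotAngle (Q t)) (hπ : rotAngle (Q t) < π) :
    HasDerivAt (fun s => rotAngle (Q s) ^ 2 / 2)
      ((trace (matLog (Q t) * X) - trace (matLog (Q t) * Y)) / 2) t := by
  have hsin : 0 < Real.sin (rotAngle (Q t)) := sin_pos_of_pos_of_lt_pi h0 hπ
  have hskew : (Y - X)ᵀ = -(Y - X) := by rw [transpose_sub, hX, hY]; abel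
  have htrace : trace (-X * Q t + Q t * Y) =
      Real.sin (rotAngle (Q t)) / rotAngle (Q t) * trace (matLog (Q t) * (Y - X)) := by
    rw [← trace_mul_eq_trace_matLog_mul hskew h0.ne' hsin.ne', trace_add, Matrix.neg_mul,
      trace_neg, trace_mul_comm X, Matrix.mul_sub, trace_sub]
    ring
  refine (((hQ.rotAngle_comp h0 hπ).pow 2).div_const 2).congr_deriv ?_
  rw [htrace, Matrix.mul_sub, trace_sub]
  field_simp
  ring

theorem LipschitzOnWith.sum {α ι E : Type*} [PseudoEMetricSpace α] [SeminormedAddCommGroup E]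
    {s : Set α} {f : ι → α → E} {K : ι → ℝ≥0} (u : Finset ι)
    (hf : ∀ i ∈ u, LipschitzOnWith (K i) (f i) s) :
    LipschitzOnWith (∑ i ∈ u, K i) (fun x => ∑ i ∈ u, f i x) s := by
  classical
  induction u using Finset.induction_on with
  | empty => simpa using (LipschitzWith.const (α := α) (0 : E)).lipschitzOnWith (s := s)
  | insert i u hi ih =>
    simp only [Finset.sum_insert hi]
    exact (hf i (Finset.mem_insert_self i u)).add
      (ih fun j hj => hf j (Finset.mem_insert_of_mem hj))

theorem LipschitzOnWith.norm_sq {α E : Type*} [PseudoMetricSpace α] [SeminormedAddCommGroup E]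
    {s : Set α} {f : α → E} {K B : ℝ≥0} (hf : LipschitzOnWith K f s)
    (hB : ∀ x ∈ s, ‖f x‖ ≤ B) : LipschitzOnWith (2 * B * K) (fun x => ‖f x‖ ^ 2) s := by
  refine LipschitzOnWith.of_dist_le_mul fun x hx y hy => ?_
  have hxy := hf.dist_le_mul x hx y hy
  rw [dist_eq_norm] at hxy
  rw [Real.dist_eq, sq_sub_sq, abs_mul]
  calc |‖f x‖ + ‖f y‖| * |‖f x‖ - ‖f y‖| ≤ (2 * B) * (K * dist x y) := by
        gcongr
        · rw [abs_of_nonneg (by positivity)]; linarith [hB x hx, hB y hy]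
        · exact (abs_norm_sub_norm_le _ _).trans hxy
    _ = _ := by push_cast; ring

theorem Convex.exists_lipschitzOnWith_of_hasDerivAt {E : Type*} [NormedAddCommGroup E]
    [NormedSpace ℝ E] {f : ℝ → E} {s : Set ℝ} (hs : Convex ℝ s) {C : ℝ}
    (hf : ∀ t ∈ s, ∃ f', HasDerivAt f f' t ∧ ‖f'‖ ≤ C) : ∃ K, LipschitzOnWith K f s := by
  choose! f' hf' hC using hf
  refine ⟨C.toNNReal, hs.lipschitzOnWith_of_nnnorm_hasDerivWithin_le
    (fun t ht => (hf' t ht).hasDerivWithinAt) fun t ht => ?_⟩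
  rw [← NNReal.coe_le_coe, coe_nnnorm, Real.coe_toNNReal']
  exact (hC t ht).trans (le_max_left _ _)

section Barbalat

variable {φ g : ℝ → ℝ} {a : ℝ}

theorem AntitoneOn.exists_tendsto_atTop_Ici (hφ : AntitoneOn φ (Ici a))
    (hbdd : BddBelow (φ '' Ici a)) : ∃ l, Tendsto φ atTop (𝓝 l) := by
  have hanti : Antitone fun t => φ (max a t) := fun s t hst =>
    hφ (le_max_left a s) (le_max_left a t) (max_le_max le_rfl hst)
  have hbdd' : BddBelow (range fun t => φ (max a t)) :=
    hbdd.mono (range_subset_iff.2 fun t => mem_image_of_mem φ (le_max_left a t))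
  refine ⟨_, (tendsto_atTop_ciInf hanti hbdd').congr' ?_⟩
  filter_upwards [eventually_ge_atTop a] with t ht
  rw [max_eq_right ht]

theorem mul_sub_le_sub_of_hasDerivAt_neg_of_lipschitzOnWith {K : ℝ≥0}
    (hφ : ∀ t ∈ Ici a, HasDerivAt φ (-g t) t) (hK : LipschitzOnWith K g (Ici a))
    {t r : ℝ} (ht : a ≤ t) (hr : 0 ≤ r) : r * (g t - K * r) ≤ φ t - φ (t + r) := by
  set c := g t - K * r
  have hsub : Icc t (t + r) ⊆ Ici a := fun s hs => ht.trans hs.1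
  have hderiv : ∀ s ∈ Icc t (t + r), HasDerivAt (fun s => φ s + c * s) (-g s + c) s := fun s hs =>
    by simpa using (hφ s (hsub hs)).fun_add ((hasDerivAt_id' s).const_mul c)
  have hanti : AntitoneOn (fun s => φ s + c * s) (Icc t (t + r)) := by
    refine antitoneOn_of_hasDerivWithinAt_nonpos (convex_Icc t (t + r))
      (fun s hs => (hderiv s hs).continuousAt.continuousWithinAt)
      (fun s hs => (hderiv s (interior_subset hs)).hasDerivWithinAt) fun s hs => ?_
    have hs' := interior_subset hs
    have hdist := hK.dist_le_mul s (hsub hs') t (hsub (left_mem_Icc.2 (by linarith [hs'.2])))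
    rw [Real.dist_eq, Real.dist_eq, abs_of_nonneg (sub_nonneg.2 hs'.1)] at hdist
    have : K * (s - t) ≤ K * r := by gcongr; linarith [hs'.2]
    linarith [(abs_le.1 hdist).1]
  have := hanti (left_mem_Icc.2 (by linarith)) (right_mem_Icc.2 (by linarith)) (by linarith)
  simp only at this
  linarith

theorem tendsto_zero_of_hasDerivAt_neg_of_lipschitzOnWith {K : ℝ≥0}
    (hφ : ∀ t ∈ Ici a, HasDerivAt φ (-g t) t) (hg : ∀ t ∈ Ici a, 0 ≤ g t)
    (hbdd : BddBelow (φ '' Ici a)) (hK : LipschitzOnWith K g (Ici a)) :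
    Tendsto g atTop (𝓝 0) := by
  have hanti : AntitoneOn φ (Ici a) :=
    antitoneOn_of_hasDerivWithinAt_nonpos (convex_Ici a)
      (fun t ht => (hφ t ht).continuousAt.continuousWithinAt)
      (fun t ht => (hφ t (interior_subset ht)).hasDerivWithinAt)
      fun t ht => neg_nonpos.2 (hg t (interior_subset ht))
  obtain ⟨l, hl⟩ := hanti.exists_tendsto_atTop_Ici hbdd
  refine tendsto_order.2 ⟨fun δ hδ => ?_, fun δ hδ => ?_⟩
  · filter_upwards [eventually_ge_atTop a] with t ht
    exact hδ.trans_le (hg t ht)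
  set r := δ / (2 * (K + 1))
  have hr : 0 < r := by positivity
  have hKr : K * r ≤ δ / 2 := by
    calc (K : ℝ) * r ≤ (K + 1) * r := by gcongr; linarith
      _ = δ / 2 := by simp only [r]; field_simp
  have hdrop : Tendsto (fun t => φ t - φ (t + r)) atTop (𝓝 0) := by
    simpa using hl.sub (hl.comp (tendsto_atTop_add_const_right _ r tendsto_id))
  filter_upwards [hdrop.eventually (gt_mem_nhds (by positivity : 0 < r * (δ / 2))),
    eventually_ge_atTop a] with t hdrop_t ht
  have key := mul_sub_le_sub_of_hasDerivAt_neg_of_lipschitzOnWith hφ hK ht hr.le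
  have : g t - K * r < δ / 2 := lt_of_mul_lt_mul_left (key.trans_lt hdrop_t) hr.le
  linarith

end Barbalat

theorem Finset.sum_sum_filter_swap_of_symm {V M : Type*} [Fintype V] [AddCommMonoid M]
    {Adj : V → V → Prop} [DecidableRel Adj] (hsym : ∀ i j, Adj i j → Adj j i) (F : V → V → M) :
    ∑ i, ∑ j ∈ Finset.univ.filter (fun j => Adj i j), F j i =
      ∑ i, ∑ j ∈ Finset.univ.filter (fun j => Adj i j), F i j := by
  simp only [Finset.sum_filter]
  rw [Finset.sum_comm]
  exact Finset.sum_congr rfl fun i _ => Finset.sum_congr rfl fun j _ =>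
    if_congr ⟨hsym j i, hsym i j⟩ rfl rfl

section GeoD

variable {V : Type*} {Adj : V → V → Prop} [DecidableRel Adj]
  {Rtil : V → V → M₃} {R : V → ℝ → M₃} {i j : V} {t : ℝ}

def relRot (Rtil : V → V → M₃) (R : V → ℝ → M₃) (i j : V) (t : ℝ) : M₃ :=
  (R i t)ᵀ * R j t * (Rtil i j)ᵀ

theorem SO3.relRot (hi : SO3 (R i t)) (hj : SO3 (R j t)) (hij : SO3 (Rtil i j)) :
    SO3 (relRot Rtil R i j t) :=
  (hi.transpose.mul hj).mul hij.transpose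

theorem relRot_swap (hO : (Rtil i j)ᵀ * Rtil i j = 1) (hpair : Rtil j i = (Rtil i j)ᵀ) :
    relRot Rtil R j i t = (Rtil i j)ᵀ * (relRot Rtil R i j t)ᵀ * Rtil i j := by
  simp only [relRot, hpair, transpose_transpose, transpose_mul, ← Matrix.mul_assoc, hO,
    Matrix.one_mul]

theorem matLog_relRot_swap (hO : (Rtil i j)ᵀ * Rtil i j = 1) (hpair : Rtil j i = (Rtil i j)ᵀ) :
    matLog (relRot Rtil R j i t) = -((Rtil i j)ᵀ * matLog (relRot Rtil R i j t) * Rtil i j) := by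
  rw [relRot_swap hO hpair, matLog_conj hO, matLog_transpose, Matrix.mul_neg, Matrix.neg_mul]

variable [Fintype V]

noncomputable def geoDControl (Adj : V → V → Prop) [DecidableRel Adj] (Rtil : V → V → M₃)
    (R : V → ℝ → M₃) (i : V) (t : ℝ) : M₃ :=
  ∑ j ∈ Finset.univ.filter (fun j => Adj i j), matLog (relRot Rtil R i j t)

noncomputable def geoDEnergy (Adj : V → V → Prop) [DecidableRel Adj] (Rtil : V → V → M₃)
    (R : V → ℝ → M₃) (t : ℝ) : ℝ :=
  ∑ i, ∑ j ∈ Finset.univ.filter (fun j => Adj i j), rotAngle (relRot Rtil R i j t) ^ 2 / 2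

theorem transpose_geoDControl (i : V) (t : ℝ) :
    (geoDControl Adj Rtil R i t)ᵀ = -geoDControl Adj Rtil R i t := by
  simp only [geoDControl, transpose_sum, transpose_matLog, Finset.sum_neg_distrib]

theorem hasDerivAt_relRot (hi : HasDerivAt (R i) (R i t * geoDControl Adj Rtil R i t) t)
    (hj : HasDerivAt (R j) (R j t * geoDControl Adj Rtil R j t) t)
    (hO : (Rtil i j)ᵀ * Rtil i j = 1) :
    HasDerivAt (relRot Rtil R i j)
      (-geoDControl Adj Rtil R i t * relRot Rtil R i j t +
        relRot Rtil R i j t * (Rtil i j * geoDControl Adj Rtil R j t * (Rtil i j)ᵀ)) t := by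
  refine ((hi.matrix_transpose.mul hj).mul_const (Rtil i j)ᵀ).congr_deriv ?_
  rw [transpose_mul, transpose_geoDControl]
  simp only [relRot, Matrix.add_mul, Matrix.neg_mul, Matrix.mul_assoc]
  rw [← Matrix.mul_assoc (Rtil i j)ᵀ, hO, Matrix.one_mul]

theorem hasDerivAt_rotAngle_relRot_sq (hi : HasDerivAt (R i) (R i t * geoDControl Adj Rtil R i t) t)
    (hj : HasDerivAt (R j) (R j t * geoDControl Adj Rtil R j t) t)
    (hO : (Rtil i j)ᵀ * Rtil i j = 1) (hpair : Rtil j i = (Rtil i j)ᵀ)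
    (h0 : 0 < rotAngle (relRot Rtil R i j t)) (hπ : rotAngle (relRot Rtil R i j t) < π) :
    HasDerivAt (fun s => rotAngle (relRot Rtil R i j s) ^ 2 / 2)
      ((trace (matLog (relRot Rtil R i j t) * geoDControl Adj Rtil R i t) +
        trace (matLog (relRot Rtil R j i t) * geoDControl Adj Rtil R j t)) / 2) t := by
  have hY : (Rtil i j * geoDControl Adj Rtil R j t * (Rtil i j)ᵀ)ᵀ =
      -(Rtil i j * geoDControl Adj Rtil R j t * (Rtil i j)ᵀ) := by
    rw [transpose_mul, transpose_mul, transpose_transpose, transpose_geoDControl,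
      Matrix.neg_mul, Matrix.mul_neg, Matrix.mul_assoc]
  refine ((hasDerivAt_relRot hi hj hO).rotAngle_sq_div_two_of_skew (transpose_geoDControl i t) hY
    h0 hπ).congr_deriv ?_
  rw [matLog_relRot_swap hO hpair, Matrix.neg_mul, trace_neg]
  simp only [Matrix.mul_assoc]
  rw [trace_mul_comm (Rtil i j)ᵀ]
  simp only [Matrix.mul_assoc]
  ring

theorem hasDerivAt_geoDEnergy (hsym : ∀ i j, Adj i j → Adj j i)
    (hRtilSO : ∀ i j, Adj i j → SO3 (Rtil i j)) (hpair : ∀ i j, Adj i j → Rtil j i = (Rtil i j)ᵀ)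
    (hθ : ∀ i j, Adj i j → rotAngle (relRot Rtil R i j t) ∈ Ioo 0 π)
    (hdyn : ∀ i, HasDerivAt (R i) (R i t * geoDControl Adj Rtil R i t) t) :
    HasDerivAt (geoDEnergy Adj Rtil R) (-∑ i, ‖geoDControl Adj Rtil R i t‖ ^ 2) t := by
  have hedge := fun i j (hij : Adj i j) => hasDerivAt_rotAngle_relRot_sq (hdyn i) (hdyn j)
    (hRtilSO i j hij).1 (hpair i j hij) (hθ i j hij).1 (hθ i j hij).2
  refine (HasDerivAt.fun_sum fun i _ => HasDerivAt.fun_sum fun j hj =>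
    hedge i j (Finset.mem_filter.1 hj).2).congr_deriv ?_
  have hvertex : ∀ i, ∑ j ∈ Finset.univ.filter (fun j => Adj i j),
      trace (matLog (relRot Rtil R i j t) * geoDControl Adj Rtil R i t) =
        -‖geoDControl Adj Rtil R i t‖ ^ 2 := fun i => by
    rw [← trace_sum, ← Finset.sum_mul]
    exact trace_mul_self_eq_neg_frobenius_norm_sq _ (transpose_geoDControl i t)
  simp only [← Finset.sum_div, Finset.sum_add_distrib]
  rw [Finset.sum_sum_filter_swap_of_symm hsym fun a b =>
      trace (matLog (relRot Rtil R a b t) * geoDControl Adj Rtil R a t)]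
  simp only [hvertex, Finset.sum_neg_distrib]
  ring

theorem norm_geoDControl_le (hQ : ∀ j, Adj i j → SO3 (relRot Rtil R i j t)) :
    ‖geoDControl Adj Rtil R i t‖ ≤ Fintype.card V * (√2 * π) :=
  calc ‖geoDControl Adj Rtil R i t‖
      ≤ ∑ j ∈ Finset.univ.filter (fun j => Adj i j), ‖matLog (relRot Rtil R i j t)‖ :=
        norm_sum_le _ _
    _ ≤ ∑ j ∈ Finset.univ.filter (fun j => Adj i j), √2 * π :=
        Finset.sum_le_sum fun j hj => (hQ j (Finset.mem_filter.1 hj).2).norm_matLog_le.trans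
          (by gcongr; exact arccos_le_pi _)
    _ ≤ Fintype.card V * (√2 * π) := by
        rw [Finset.sum_const, nsmul_eq_mul]
        gcongr
        exact_mod_cast Finset.card_le_univ _

theorem exists_lipschitzOnWith_matLog_relRot (hSO : ∀ i t, 0 ≤ t → SO3 (R i t))
    (hRtilSO : ∀ i j, Adj i j → SO3 (Rtil i j))
    (hθ : ∀ i j, Adj i j → ∀ t, 0 ≤ t → rotAngle (relRot Rtil R i j t) ∈ Ioc 0 (π / 2))
    (hdyn : ∀ i t, 0 ≤ t → HasDerivAt (R i) (R i t * geoDControl Adj Rtil R i t) t)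
    (hij : Adj i j) :
    ∃ K, LipschitzOnWith K (fun t => matLog (relRot Rtil R i j t)) (Ici 0) := by
  set B := Fintype.card V * (√2 * π)
  have hL : ∀ k t, 0 ≤ t → ‖geoDControl Adj Rtil R k t‖ ≤ B := fun k t ht =>
    norm_geoDControl_le fun l hkl => (hSO k t ht).relRot (hSO l t ht) (hRtilSO k l hkl)
  refine (convex_Ici 0).exists_lipschitzOnWith_of_hasDerivAt
    (C := 7 * (B * √3 + √3 * (√3 * B * √3))) fun t ht => ?_
  have hRtil := hRtilSO i j hij
  have hQ := (hSO i t ht).relRot (hSO j t ht) hRtil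
  obtain ⟨U', hU', hU'_le⟩ := (hasDerivAt_relRot (hdyn i t ht) (hdyn j t ht) hRtil.1)
    |>.exists_matLog_comp_norm_le hQ (hθ i j hij t ht).1 (hθ i j hij t ht).2
  refine ⟨U', hU', hU'_le.trans ?_⟩
  gcongr
  refine (norm_add_le _ _).trans (add_le_add ((norm_mul_le _ _).trans ?_)
    ((norm_mul_le _ _).trans ?_))
  · rw [norm_neg, hQ.norm_eq]
    gcongr
    exact hL i t ht
  · rw [hQ.norm_eq]
    gcongr
    refine (norm_mul_le _ _).trans ?_
    rw [hRtil.transpose.norm_eq]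
    gcongr
    refine (norm_mul_le _ _).trans ?_
    rw [hRtil.norm_eq]
    gcongr
    exact hL j t ht

theorem exists_lipschitzOnWith_sum_norm_sq_geoDControl (hSO : ∀ i t, 0 ≤ t → SO3 (R i t))
    (hRtilSO : ∀ i j, Adj i j → SO3 (Rtil i j))
    (hθ : ∀ i j, Adj i j → ∀ t, 0 ≤ t → rotAngle (relRot Rtil R i j t) ∈ Ioc 0 (π / 2))
    (hdyn : ∀ i t, 0 ≤ t → HasDerivAt (R i) (R i t * geoDControl Adj Rtil R i t) t) :
    ∃ K, LipschitzOnWith K (fun t => ∑ i, ‖geoDControl Adj Rtil R i t‖ ^ 2) (Ici 0) := by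
  have hU : ∀ i, ∀ j ∈ Finset.univ.filter (fun j => Adj i j),
      ∃ K, LipschitzOnWith K (fun t => matLog (relRot Rtil R i j t)) (Ici 0) :=
    fun i j hj =>
      exists_lipschitzOnWith_matLog_relRot hSO hRtilSO hθ hdyn (Finset.mem_filter.1 hj).2
  choose! K hK using hU
  have hB : ∀ i, ∀ t ∈ Ici (0 : ℝ),
      ‖geoDControl Adj Rtil R i t‖ ≤ (⟨Fintype.card V * (√2 * π), by positivity⟩ : ℝ≥0) :=
    fun i t ht =>
      norm_geoDControl_le fun j hij => (hSO i t ht).relRot (hSO j t ht) (hRtilSO i j hij)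
  exact ⟨_, LipschitzOnWith.sum _ fun i _ => ((LipschitzOnWith.sum _ (hK i)).norm_sq (hB i))⟩

theorem tendsto_geoDControl (hsym : ∀ i j, Adj i j → Adj j i)
    (hRtilSO : ∀ i j, Adj i j → SO3 (Rtil i j)) (hpair : ∀ i j, Adj i j → Rtil j i = (Rtil i j)ᵀ)
    (hSO : ∀ i t, 0 ≤ t → SO3 (R i t))
    (hθ : ∀ i j, Adj i j → ∀ t, 0 ≤ t → rotAngle (relRot Rtil R i j t) ∈ Ioc 0 (π / 2))
    (hdyn : ∀ i t, 0 ≤ t → HasDerivAt (R i) (R i t * geoDControl Adj Rtil R i t) t) (i : V) :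
    Tendsto (geoDControl Adj Rtil R i) atTop (𝓝 0) := by
  obtain ⟨K, hK⟩ := exists_lipschitzOnWith_sum_norm_sq_geoDControl hSO hRtilSO hθ hdyn
  have hθπ : ∀ t, 0 ≤ t → ∀ i j, Adj i j → rotAngle (relRot Rtil R i j t) ∈ Ioo 0 π :=
    fun t ht i j hij => ⟨(hθ i j hij t ht).1, (hθ i j hij t ht).2.trans_lt (by linarith [pi_pos])⟩
  have hrate : Tendsto (fun t => ∑ i, ‖geoDControl Adj Rtil R i t‖ ^ 2) atTop (𝓝 0) :=
    tendsto_zero_of_hasDerivAt_neg_of_lipschitzOnWith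
      (fun t ht => hasDerivAt_geoDEnergy hsym hRtilSO hpair (hθπ t ht) fun i => hdyn i t ht)
      (fun t _ => by positivity) ⟨0, by rintro _ ⟨t, -, rfl⟩; unfold geoDEnergy; positivity⟩ hK
  refine squeeze_zero_norm (fun t => ?_) (by simpa using hrate.sqrt)
  refine Real.le_sqrt_of_sq_le ?_
  exact Finset.single_le_sum (f := fun i => ‖geoDControl Adj Rtil R i t‖ ^ 2)
    (fun _ _ => sq_nonneg _) (Finset.mem_univ i)

end GeoD

/-- (Rotation estimation convergence.) Under pairwise consistent measurements, relative
geodesic errors staying in `(0, π/2 − ε]`, and the GeoD rotation dynamics on `[0, ∞)`,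
each rotational control `ω_i(t) = Σ_{j∼i} (Log(Rᵢ(t)ᵀ Rⱼ(t) R̃(i,j)ᵀ))^∨` tends to `0`
as `t → ∞`. -/
theorem geoD_rotation_convergence {V : Type*} [Fintype V]
    (Adj : V → V → Prop) [DecidableRel Adj] (hsym : ∀ i j, Adj i j → Adj j i)
    (Rtil : V → V → Matrix (Fin 3) (Fin 3) ℝ)
    (hRtilSO : ∀ i j, Adj i j → SO3 (Rtil i j))
    (hpair : ∀ i j, Adj i j → Rtil j i = (Rtil i j)ᵀ)
    (ε : ℝ) (hε : 0 < ε)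
    (R : V → ℝ → Matrix (Fin 3) (Fin 3) ℝ)
    (hSO : ∀ i t, 0 ≤ t → SO3 (R i t))
    (hθ : ∀ i j, Adj i j → ∀ t, 0 ≤ t →
      rotAngle ((R i t)ᵀ * R j t * (Rtil i j)ᵀ) ∈ Set.Ioc 0 (π / 2 - ε))
    (hdyn : ∀ i t, 0 ≤ t → ∀ p q, HasDerivAt (fun s => R i s p q)
      ((R i t * ∑ j ∈ Finset.univ.filter (fun j => Adj i j),
          matLog ((R i t)ᵀ * R j t * (Rtil i j)ᵀ)) p q) t) :
    ∀ i, Tendsto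
      (fun t => ∑ j ∈ Finset.univ.filter (fun j => Adj i j),
        vee (matLog ((R i t)ᵀ * R j t * (Rtil i j)ᵀ)))
      atTop (nhds 0) := by
  have hθ' : ∀ i j, Adj i j → ∀ t, 0 ≤ t → rotAngle (relRot Rtil R i j t) ∈ Ioc 0 (π / 2) :=
    fun i j hij t ht => ⟨(hθ i j hij t ht).1, (hθ i j hij t ht).2.trans (by linarith)⟩
  have hdyn' : ∀ i t, 0 ≤ t → HasDerivAt (R i) (R i t * geoDControl Adj Rtil R i t) t :=
    fun i t ht => HasDerivAt.of_matrix_entries (hdyn i t ht)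
  intro i
  refine squeeze_zero_norm (fun t => ?_) (tendsto_zero_iff_norm_tendsto_zero.1
    (tendsto_geoDControl hsym hRtilSO hpair hSO hθ' hdyn' i))
  rw [vee_sum]
  exact norm_vee_le _
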